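/- arXiv:2007.07641 — 3 statements merged into one kernel-verified Lean document; each statement's English description precedes it below -/
import Mathlib

section
/- Let s₂(n) denote the number of partitions of n into parts congruent to 2 or 4 modulo 6. For every integer n ≥ 0, s₂(n) + ∑_{j≥1} (−1)^j [ s₂(n − j(3j−1)) + s₂(n − j(3j+1)) ] equals (−1)^j if n = 6·j(3j−1)/2 for some integer j ∈ ℤ, and equals 0 otherwise; the sum is finite under the convention s₂(x) = 0 for x < 0. -/
/-- `s2 n` is the number of partitions of `n` all of whose parts are congruent to
`2` or `4` modulo `6` (i.e. to `±2 (mod 6)`). -/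
def s2 (n : ℕ) : ℕ :=
  (Finset.univ.filter fun P : Nat.Partition n => ∀ i ∈ P.parts, i % 6 = 2 ∨ i % 6 = 4).card

/-- `s2Z` extends `s2` to `ℤ` by the convention `s2 x = 0` for `x < 0`. -/
def s2Z (x : ℤ) : ℤ := if 0 ≤ x then (s2 x.toNat : ℤ) else 0

/-!
Write `P(q) = ∏_{k ≥ 1} (1 - q^k) = ∑_{j ∈ ℤ} (-1)^j q^{j(3j-1)/2}` (Euler's pentagonal number
theorem). The even parts `k` split into those with `k ≡ ±2 (mod 6)` and the multiples of `6`, so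
`P(q²) = ∏_{k ≡ ±2 (6)} (1 - q^k) · P(q⁶)`, and multiplying by the generating function
`∏_{k ≡ ±2 (6)} (1 - q^k)⁻¹` of `s₂` gives `P(q²) · ∑ s₂(n) qⁿ = P(q⁶)`. The coefficient of `qⁿ`
on the left is `∑_j (-1)^j s₂(n - j(3j-1))`, and on the right it is `(-1)^j` if
`n = 6 · j(3j-1)/2` and `0` otherwise.
-/

open PowerSeries PowerSeries.WithPiTopology

theorem HasSum.add_tsum_nat_add_one_add_neg {M : Type*} [AddCommGroup M] [TopologicalSpace M]
    [IsTopologicalAddGroup M] [T2Space M] {f : ℤ → M} {a : M} (hf : HasSum f a) :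
    f 0 + ∑' n : ℕ, (f (n + 1) + f (-(n + 1))) = a := by
  have h := hf.nat_add_neg
  have h0 := h.summable.tsum_eq_zero_add
  rw [h.tsum_eq] at h0
  push_cast at h0
  rw [neg_zero, add_assoc, add_comm (f 0)] at h0
  exact add_right_cancel h0.symm

namespace PowerSeries

section Topological

variable {R : Type*} [CommRing R] [TopologicalSpace R]

theorem WithPiTopology.continuous_expand (d : ℕ) (hd : d ≠ 0) :
    Continuous (expand d hd : R⟦X⟧ → R⟦X⟧) := by
  refine continuous_iff_continuousAt.2 fun f ↦ (tendsto_iff_coeff_tendsto _ _ _ _).2 fun n ↦ ?_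
  simp_rw [coeff_expand]
  split_ifs
  · exact (continuous_coeff R _).tendsto f
  · exact tendsto_const_nhds

theorem WithPiTopology.hasProd_expand_pentagonalSeries (d : ℕ) (hd : d ≠ 0) :
    HasProd (fun i ↦ if d ∣ i + 1 then 1 - X ^ (i + 1) else 1 : ℕ → R⟦X⟧)
      (expand d hd (pentagonalSeries R)) := by
  have h := (hasProd_one_sub_X_pow R).map (expand d hd) (continuous_expand d hd)
  have hg : Function.Injective fun i : ℕ ↦ d * i + (d - 1) := fun a b hab ↦
    Nat.eq_of_mul_eq_mul_left (Nat.pos_of_ne_zero hd) (Nat.add_right_cancel hab)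
  rw [← hg.hasProd_iff]
  · convert h using 1
    funext i
    have hi : d * i + (d - 1) + 1 = d * (i + 1) := by
      have := Nat.pos_of_ne_zero hd
      rw [Nat.mul_succ]
      omega
    simp [hi, pow_mul]
  · intro k hk
    rw [if_neg]
    rintro ⟨_ | i, hi⟩
    · omega
    · exact hk ⟨i, by simp only; rw [Nat.mul_succ] at hi; omega⟩

theorem WithPiTopology.hasSum_coeff_expand_pentagonalSeries_mul [IsTopologicalRing R]
    (d : ℕ) (hd : d ≠ 0) (f : R⟦X⟧) (n : ℕ) :
    HasSum (fun k : ℤ ↦ (Int.negOnePow k : R) *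
        if d * pentagonal k ≤ n then coeff (n - d * pentagonal k) f else 0)
      (coeff n (expand d hd (pentagonalSeries R) * f)) := by
  have h := (((hasSum_pentagonalSeries R).map (expand d hd) (continuous_expand d hd)).mul_right
    f).map (coeff n) (continuous_coeff R n)
  convert h using 1
  funext k
  simp only [Function.comp_apply]
  rw [map_mul (expand d hd), map_intCast, map_pow, expand_X, ← pow_mul,
    ← map_intCast (C (R := R)), mul_assoc, coeff_C_mul, coeff_X_pow_mul']

end Topological

open Finset in
theorem expand_pentagonalSeries_mul_card_restricted (R : Type*) [CommRing R]
    {d e : ℕ} (hd : d ≠ 0) (he : e ≠ 0) (hde : d ∣ e) :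
    expand d hd (pentagonalSeries R) *
        mk (fun n ↦ (#(Nat.Partition.restricted n fun i ↦ d ∣ i ∧ ¬ e ∣ i) : R)) =
      expand e he (pentagonalSeries R) := by
  let _ : TopologicalSpace R := ⊥
  have _ : DiscreteTopology R := ⟨rfl⟩
  refine ((hasProd_expand_pentagonalSeries d hd).mul
    (Nat.Partition.hasProd_powerSeriesMk_card_restricted R _)).unique ?_
  convert hasProd_expand_pentagonalSeries (R := R) e he using 1
  funext i
  simp_rw [pow_mul]
  split_ifs with h1 h2 h3 h3 h2 h3 h3
  · exact absurd h3 h2.2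
  · exact one_sub_mul_tsum_pow_of_constantCoeff_eq_zero (by simp)
  · rw [mul_one]
  · exact absurd ⟨h1, h3⟩ h2
  · exact absurd h2.1 h1
  · exact absurd h2.1 h1
  · exact absurd (hde.trans h3) h1
  · rw [mul_one]

end PowerSeries

open Finset in
theorem s2_eq_card_restricted (n : ℕ) :
    s2 n = #(Nat.Partition.restricted n fun i ↦ 2 ∣ i ∧ ¬ 6 ∣ i) := by
  rw [s2, Nat.Partition.restricted]
  congr 1
  exact filter_congr fun P _ ↦ forall₂_congr fun i _ ↦ by omega

theorem expand_two_pentagonalSeries_mul_mk_s2 (R : Type*) [CommRing R] :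
    expand 2 two_ne_zero (pentagonalSeries R) * mk (fun n ↦ (s2 n : R)) =
      expand 6 (by norm_num) (pentagonalSeries R) := by
  simp_rw [s2_eq_card_restricted]
  exact expand_pentagonalSeries_mul_card_restricted R _ _ (by norm_num)

theorem s2Z_natCast_sub (n m : ℕ) :
    s2Z (n - m) = if m ≤ n then (s2 (n - m) : ℤ) else 0 := by
  unfold s2Z
  split_ifs with h₁ h₂ h₂
  · rw [show ((n : ℤ) - m).toNat = n - m by omega]
  · omega
  · omega
  · rfl

theorem hasSum_negOnePow_mul_s2Z (n : ℕ) :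
    HasSum (fun k : ℤ ↦ (k.negOnePow : ℤ) * s2Z (n - k * (3 * k - 1)))
      (coeff n (expand 6 (by norm_num) (pentagonalSeries ℤ))) := by
  have h := hasSum_coeff_expand_pentagonalSeries_mul 2 two_ne_zero (mk fun n ↦ (s2 n : ℤ)) n
  rw [expand_two_pentagonalSeries_mul_mk_s2] at h
  refine h.congr_fun fun k ↦ ?_
  congr 1
  rw [← two_mul_natCast_pentagonal, ← Nat.cast_ofNat, ← Nat.cast_mul, s2Z_natCast_sub, coeff_mk]

theorem s2_add_tsum_eq_coeff_expand_pentagonalSeries (n : ℕ) :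
    (s2 n : ℤ) + ∑' j' : ℕ, (-1 : ℤ) ^ (j' + 1) *
        (s2Z ((n : ℤ) - ((j' : ℤ) + 1) * (3 * ((j' : ℤ) + 1) - 1)) +
          s2Z ((n : ℤ) - ((j' : ℤ) + 1) * (3 * ((j' : ℤ) + 1) + 1))) =
      coeff n (expand 6 (by norm_num) (pentagonalSeries ℤ)) := by
  rw [← (hasSum_negOnePow_mul_s2Z n).add_tsum_nat_add_one_add_neg]
  congr 1
  · simp [s2Z]
  · refine tsum_congr fun m ↦ ?_
    rw [Int.negOnePow_neg, ← Nat.cast_succ, Int.coe_negOnePow_natCast, mul_add]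
    push_cast
    rw [show -((m : ℤ) + 1) * (3 * -((m : ℤ) + 1) - 1) = ((m : ℤ) + 1) * (3 * ((m : ℤ) + 1) + 1) by
      ring]

theorem eq_six_mul_pentagonal_iff {n : ℕ} {j : ℤ} :
    n = 6 * pentagonal j ↔ (n : ℤ) = 3 * (j * (3 * j - 1)) := by
  have := two_mul_natCast_pentagonal j
  omega

/-- For every `n ≥ 0`,
`s₂(n) + ∑_{j ≥ 1} (-1)^j [s₂(n - j(3j-1)) + s₂(n - j(3j+1))]`
equals `(-1)^j` if `n = 6·j(3j-1)/2 = 3j(3j-1)` for some `j ∈ ℤ`, and `0` otherwise. -/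
theorem stmt12 (n : ℕ) :
    (∀ j : ℤ, (n : ℤ) = 3 * (j * (3 * j - 1)) →
      (s2 n : ℤ) +
        ∑' j' : ℕ, (-1 : ℤ) ^ (j' + 1) *
          (s2Z ((n : ℤ) - ((j' : ℤ) + 1) * (3 * ((j' : ℤ) + 1) - 1)) +
            s2Z ((n : ℤ) - ((j' : ℤ) + 1) * (3 * ((j' : ℤ) + 1) + 1))) =
        (if Even j then 1 else -1)) ∧
    ((¬ ∃ j : ℤ, (n : ℤ) = 3 * (j * (3 * j - 1))) →
      (s2 n : ℤ) +
        ∑' j' : ℕ, (-1 : ℤ) ^ (j' + 1) *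
          (s2Z ((n : ℤ) - ((j' : ℤ) + 1) * (3 * ((j' : ℤ) + 1) - 1)) +
            s2Z ((n : ℤ) - ((j' : ℤ) + 1) * (3 * ((j' : ℤ) + 1) + 1))) =
        0) := by
  simp only [s2_add_tsum_eq_coeff_expand_pentagonalSeries]
  refine ⟨fun j hj ↦ ?_, fun h ↦ ?_⟩
  · rw [eq_six_mul_pentagonal_iff.2 hj, coeff_expand_mul, coeff_pentagonalSeries_pentagonal]
    rcases Int.even_or_odd j with hj | hj
    · simp [hj, Int.negOnePow_even]
    · simp [hj, Int.negOnePow_odd, Int.not_even_iff_odd]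
  · rw [coeff_expand, ite_eq_right_iff]
    rintro ⟨m, rfl⟩
    rw [Nat.mul_div_cancel_left m (by norm_num)]
    refine coeff_pentagonalSeries_eq_zero ℤ ?_
    rintro ⟨j, rfl⟩
    exact h ⟨j, eq_six_mul_pentagonal_iff.1 rfl⟩
end

section
/- As formal power series over ℤ, ∏_{k≥1} (1 + X^{2k})(1 − X^{2k−1}) · ∏_{k≥1} (1 − X^{2k}) = ∑_{n≥0} (−1)^{n(n+1)/2} X^{n(n+1)/2}; that is, this product equals ψ(−X), where ψ is Ramanujan's theta function. -/
open scoped Classical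

open PowerSeries

/-- The infinite product `∏_{k ≥ 0} f k` of formal power series, in the situation where the
`k`-th factor is `1 + (multiple of X^(k+1))`: the coefficient of `X^n` in the product is then
the (stable) coefficient of `X^n` in any partial product containing at least the first `n + 1`
factors. -/
noncomputable def iprod (f : ℕ → PowerSeries ℤ) : PowerSeries ℤ :=
  PowerSeries.mk fun n => PowerSeries.coeff n (∏ k ∈ Finset.range (n + 1), f k)

/-!
The left-hand side is `∏_{k ≥ 1} (1 - X^{2k-1})(1 - X^{4k})`. Put `q = X^4`. The finite Jacobi
triple product `∏_{k<N} (z + q^{k+1})(1 + z q^k) = ∑_i [2N, i]_q q^{j(j-1)/2} z^i`, `j = i - N`,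
follows from the two q-Pascal rules by adding one factor at a time. At `z = -X` it writes
`(-X)^N ∏_{k<N} (1 - X^{4k+1})(1 - X^{4k+3})` as `∑_i (-1)^i X^{N + j(2j-1)} [2N, i]_q`.
Multiplying by `(q; q)_{2N}` turns `[2N, i]_q` into a product of factors `1 - q^e` with
`e > min(i, 2N - i)`, so that below degree `2N` only the monomials `X^{N + j(2j-1)}` survive.
Finally `j ↦ j(2j-1)` is a bijection from `ℤ` onto the triangular numbers `m(m+1)/2`
(`m = 2j - 1` or `m = -2j`), and `(-1)^j = (-1)^{j(2j-1)}`.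
-/

open Finset

lemma dvd_mul_sub_one {R : Type*} [CommRing R] {a x y : R} (hx : a ∣ x - 1) (hy : a ∣ y - 1) :
    a ∣ x * y - 1 := by
  rw [show x * y - 1 = x * (y - 1) + (x - 1) by ring]
  exact dvd_add (dvd_mul_of_dvd_right hy x) hx

lemma dvd_prod_sub_one {ι R : Type*} [CommRing R] {a : R} {s : Finset ι} {f : ι → R}
    (h : ∀ i ∈ s, a ∣ f i - 1) : a ∣ ∏ i ∈ s, f i - 1 :=
  prod_induction f (fun x => a ∣ x - 1) (fun _ _ => dvd_mul_sub_one) (by simp) h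

lemma pow_dvd_one_sub_pow_sub_one {R : Type*} [CommRing R] (q : R) {s e : ℕ} (h : s ≤ e) :
    q ^ s ∣ (1 - q ^ e) - 1 := by
  rw [sub_sub_cancel_left]
  exact (pow_dvd_pow q h).neg_right

lemma Finset.prod_range_two_mul {M : Type*} [CommMonoid M] (f : ℕ → M) (n : ℕ) :
    ∏ k ∈ range (2 * n), f k = ∏ k ∈ range n, (f (2 * k) * f (2 * k + 1)) := by
  induction n with
  | zero => simp
  | succ n ih => rw [mul_add, mul_one, prod_range_succ, prod_range_succ, prod_range_succ, ih,
      mul_assoc]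

section QBinom

variable {R : Type*} [CommRing R]

def qBinom (q : R) : ℕ → ℕ → R
  | _, 0 => 1
  | 0, _ + 1 => 0
  | m + 1, k + 1 => qBinom q m k + q ^ (k + 1) * qBinom q m (k + 1)

variable (q : R)

@[simp] lemma qBinom_zero_right (m : ℕ) : qBinom q m 0 = 1 := by cases m <;> rfl

@[simp] lemma qBinom_zero_succ (k : ℕ) : qBinom q 0 (k + 1) = 0 := rfl

lemma qBinom_succ_succ (m k : ℕ) :
    qBinom q (m + 1) (k + 1) = qBinom q m k + q ^ (k + 1) * qBinom q m (k + 1) := rfl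

lemma qBinom_eq_zero_of_lt {m k : ℕ} (h : m < k) : qBinom q m k = 0 := by
  induction m generalizing k with
  | zero => obtain ⟨k, rfl⟩ := Nat.exists_eq_add_one_of_ne_zero (by omega : k ≠ 0); rfl
  | succ m ih =>
    obtain ⟨k, rfl⟩ := Nat.exists_eq_add_one_of_ne_zero (by omega : k ≠ 0)
    rw [qBinom_succ_succ, ih (by omega), ih (by omega), mul_zero, add_zero]

/-- The truncated exponent `m - k` only matters where `qBinom q m k = 0`. -/
lemma qBinom_succ_succ' (m k : ℕ) :
    qBinom q (m + 1) (k + 1) = q ^ (m - k) * qBinom q m k + qBinom q m (k + 1) := by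
  induction m generalizing k with
  | zero => cases k <;> simp [qBinom_succ_succ]
  | succ m ih =>
    conv_lhs => rw [qBinom_succ_succ q (m + 1) k, ih k]
    conv_rhs => rw [qBinom_succ_succ q m k]
    cases k with
    | zero => simp only [qBinom_zero_right, Nat.sub_zero]; ring
    | succ k =>
      conv_lhs => rw [ih k]
      conv_rhs => rw [qBinom_succ_succ q m k, show m + 1 - (k + 1) = m - k by omega]
      rcases Nat.lt_or_ge m (k + 1) with hlt | hle
      · rw [qBinom_eq_zero_of_lt q hlt]
        ring
      · have hx : q ^ (k + 1 + 1) * q ^ (m - (k + 1)) = q ^ (m - k) * q ^ (k + 1) := by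
          rw [← pow_add, ← pow_add]; congr 1; omega
        linear_combination qBinom q m (k + 1) * hx

/-- For `k > m` both sides vanish, the right one through its factor `1 - q ^ (m - m)`. -/
lemma qBinom_mul_prod_one_sub_pow (m k : ℕ) :
    qBinom q m k * ∏ j ∈ range k, (1 - q ^ (j + 1)) = ∏ j ∈ range k, (1 - q ^ (m - j)) := by
  induction m generalizing k with
  | zero => cases k <;> simp
  | succ m ih =>
    cases k with
    | zero => simp
    | succ k =>
      set D := ∏ j ∈ range k, (1 - q ^ (m - j))
      have hD : D * q ^ (m + 1) = D * (q ^ (k + 1) * q ^ (m - k)) := by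
        rcases Nat.lt_or_ge m k with hlt | hle
        · have : D = 0 := prod_eq_zero (mem_range.2 hlt) (by simp)
          simp [this]
        · rw [← pow_add]; congr 2; omega
      have ih' : qBinom q m (k + 1) * ∏ j ∈ range (k + 1), (1 - q ^ (j + 1)) =
          D * (1 - q ^ (m - k)) := by rw [ih, prod_range_succ]
      rw [prod_range_succ' (fun j => 1 - q ^ (m + 1 - j)), qBinom_succ_succ, add_mul,
        mul_assoc, ih', prod_range_succ, ← mul_assoc, ih]
      simp only [Nat.add_sub_add_right, Nat.sub_zero]
      linear_combination hD

lemma pow_dvd_qBinom_mul_prod_sub_one {m k : ℕ} (h : k ≤ m) :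
    q ^ (min k (m - k) + 1) ∣ qBinom q m k * ∏ j ∈ range m, (1 - q ^ (j + 1)) - 1 := by
  obtain ⟨l, rfl⟩ := Nat.exists_eq_add_of_le h
  rw [prod_range_add, ← mul_assoc, qBinom_mul_prod_one_sub_pow]
  refine dvd_mul_sub_one (dvd_prod_sub_one fun j hj => ?_) (dvd_prod_sub_one fun j _ => ?_) <;>
    apply pow_dvd_one_sub_pow_sub_one
  · have := mem_range.1 hj; omega
  · omega

end QBinom

/-- `j * (j - 1) / 2` at the integer `j = i - r`, i.e. `(i - r).choose 2` continued to `i < r`. -/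
def shiftedChooseTwo (r i : ℕ) : ℕ := (i - r).choose 2 + (r + 1 - i).choose 2

lemma shiftedChooseTwo_succ_succ (r i : ℕ) :
    shiftedChooseTwo (r + 1) (i + 1) = shiftedChooseTwo r i := by
  simp only [shiftedChooseTwo, Nat.add_sub_add_right]

lemma two_mul_shiftedChooseTwo (r i : ℕ) :
    (2 * shiftedChooseTwo r i : ℤ) = (i - r) * (i - r - 1) := by
  have h (a : ℕ) : (2 * a.choose 2 : ℤ) = a * (a - 1) := by
    induction a with
    | zero => simp
    | succ a ih =>
      rw [Nat.choose_succ_succ', Nat.choose_one_right]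
      push_cast
      linear_combination ih
  rcases le_or_gt r i with hri | hir
  · rw [shiftedChooseTwo, Nat.choose_eq_zero_of_lt (n := r + 1 - i) (by omega), add_zero]
    push_cast [h, Nat.cast_sub hri]
    ring
  · rw [shiftedChooseTwo, Nat.sub_eq_zero_of_le hir.le, Nat.choose_zero_succ, zero_add, h,
      Nat.cast_sub (by omega)]
    push_cast
    ring

lemma shiftedChooseTwo_succ (r i : ℕ) :
    (shiftedChooseTwo r (i + 1) : ℤ) = shiftedChooseTwo r i + i - r := by
  have h₁ := two_mul_shiftedChooseTwo r (i + 1)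
  have h₂ := two_mul_shiftedChooseTwo r i
  push_cast at h₁
  linarith

lemma sub_le_shiftedChooseTwo (r i : ℕ) : r - i ≤ shiftedChooseTwo r i := by
  have := two_mul_shiftedChooseTwo r i
  rcases le_or_gt r i with hri | hir
  · omega
  · have : ((r - i : ℕ) : ℤ) ≤ shiftedChooseTwo r i := by
      push_cast [Nat.cast_sub hir.le]
      nlinarith
    omega

section TripleProduct

variable {R : Type*} [CommRing R]

lemma coeff_prod_X_add_C_pow (q : R) (r i : ℕ) :
    (∏ k ∈ range r, (Polynomial.X + Polynomial.C (q ^ (k + 1)))).coeff i =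
      qBinom q r i * q ^ shiftedChooseTwo r i := by
  induction r generalizing i with
  | zero => cases i <;> simp [shiftedChooseTwo, Polynomial.coeff_one]
  | succ r ih =>
    rw [prod_range_succ, mul_add, Polynomial.coeff_add, Polynomial.coeff_mul_C]
    have hexp := shiftedChooseTwo_succ (r + 1) i
    rw [shiftedChooseTwo_succ_succ] at hexp
    cases i with
    | zero =>
      simp only [Nat.cast_zero, add_zero] at hexp
      rw [Polynomial.coeff_mul_X_zero, ih, qBinom_zero_right, qBinom_zero_right, zero_add,
        one_mul, one_mul, ← pow_add,
        show shiftedChooseTwo r 0 + (r + 1) = shiftedChooseTwo (r + 1) 0 by omega]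
    | succ i =>
      have hexp' := shiftedChooseTwo_succ r i
      rw [Polynomial.coeff_mul_X, ih, ih, qBinom_succ_succ, shiftedChooseTwo_succ_succ]
      have hq : q ^ shiftedChooseTwo r (i + 1) * q ^ (r + 1) =
          q ^ (i + 1) * q ^ shiftedChooseTwo r i := by
        rw [← pow_add, ← pow_add]; congr 1; omega
      linear_combination qBinom q r (i + 1) * hq

lemma coeff_prod_X_add_C_mul_prod_one_add_C_mul_X (q : R) (r s i : ℕ) :
    ((∏ k ∈ range r, (Polynomial.X + Polynomial.C (q ^ (k + 1)))) *
      ∏ k ∈ range s, (1 + Polynomial.C (q ^ k) * Polynomial.X)).coeff i =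
      qBinom q (r + s) i * q ^ shiftedChooseTwo r i := by
  induction s generalizing i with
  | zero => simpa using coeff_prod_X_add_C_pow q r i
  | succ s ih =>
    rw [prod_range_succ, ← mul_assoc, mul_add, mul_one, Polynomial.coeff_add,
      show ∀ p : Polynomial R, p * (Polynomial.C (q ^ s) * Polynomial.X) =
        p * Polynomial.X * Polynomial.C (q ^ s) from fun p => by ring, Polynomial.coeff_mul_C]
    cases i with
    | zero =>
      rw [Polynomial.coeff_mul_X_zero, zero_mul, add_zero, ih, qBinom_zero_right,
        qBinom_zero_right]
    | succ i =>
      rw [Polynomial.coeff_mul_X, ih, ih, ← add_assoc, qBinom_succ_succ']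
      rcases Nat.lt_or_ge (r + s) i with hlt | hle
      · simp [qBinom_eq_zero_of_lt q hlt]
      · have hexp := shiftedChooseTwo_succ r i
        have hq : q ^ (r + s - i) * q ^ shiftedChooseTwo r (i + 1) =
            q ^ shiftedChooseTwo r i * q ^ s := by
          rw [← pow_add, ← pow_add]; congr 1; omega
        linear_combination -qBinom q (r + s) i * hq

/-- The finite Jacobi triple product (Cauchy's q-binomial theorem in homogeneous form). -/
theorem prod_add_pow_mul_prod_one_add_pow_mul (q z : R) (r s : ℕ) :
    (∏ k ∈ range r, (z + q ^ (k + 1))) * ∏ k ∈ range s, (1 + q ^ k * z) =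
      ∑ i ∈ range (r + s + 1), qBinom q (r + s) i * q ^ shiftedChooseTwo r i * z ^ i := by
  set P := (∏ k ∈ range r, (Polynomial.X + Polynomial.C (q ^ (k + 1)))) *
    ∏ k ∈ range s, (1 + Polynomial.C (q ^ k) * Polynomial.X)
  have hdeg : P.natDegree < r + s + 1 := by
    refine Nat.lt_succ_of_le (Polynomial.natDegree_le_iff_coeff_eq_zero.2 fun i hi => ?_)
    rw [coeff_prod_X_add_C_mul_prod_one_add_C_mul_X,
      qBinom_eq_zero_of_lt q (by exact_mod_cast hi), zero_mul]
  have h := Polynomial.eval_eq_sum_range' hdeg z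
  simpa only [P, coeff_prod_X_add_C_mul_prod_one_add_C_mul_X, Polynomial.eval_mul,
    Polynomial.eval_prod, Polynomial.eval_add, Polynomial.eval_X, Polynomial.eval_C,
    Polynomial.eval_one] using h

end TripleProduct

namespace PowerSeries

variable {R : Type*} [CommRing R]

lemma coeff_eq_of_X_pow_dvd_sub {f g : R⟦X⟧} {s d : ℕ} (h : X ^ s ∣ f - g) (hd : d < s) :
    coeff d f = coeff d g := by
  rw [← sub_eq_zero, ← map_sub]
  exact X_pow_dvd_iff.1 h d hd

lemma coeff_X_pow_mul_of_X_pow_dvd_sub_one {f : R⟦X⟧} {s e d : ℕ} (h : X ^ s ∣ f - 1)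
    (hd : d < e + s) : coeff d (X ^ e * f) = if d = e then 1 else 0 := by
  rw [← coeff_X_pow]
  refine coeff_eq_of_X_pow_dvd_sub ?_ hd
  rw [pow_add, ← mul_sub_one]
  exact mul_dvd_mul_left _ h

end PowerSeries

lemma X_pow_dvd_iprod_sub_prod {f : ℕ → ℤ⟦X⟧} (hf : ∀ k, X ^ (k + 1) ∣ f k - 1) (M : ℕ) :
    X ^ M ∣ iprod f - ∏ k ∈ range M, f k := by
  refine X_pow_dvd_iff.2 fun m hm => ?_
  rw [map_sub, iprod, coeff_mk, sub_eq_zero, ← prod_range_mul_prod_Ico f hm]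
  refine (coeff_eq_of_X_pow_dvd_sub (s := m + 1) ?_ (Nat.lt_succ_self m)).symm
  rw [← mul_sub_one]
  refine dvd_mul_of_dvd_right (dvd_prod_sub_one fun k hk => ?_) _
  exact (pow_dvd_pow X (by have := mem_Ico.1 hk; omega)).trans (hf k)

lemma coeff_iprod_mul_iprod {f g : ℕ → ℤ⟦X⟧} (hf : ∀ k, X ^ (k + 1) ∣ f k - 1)
    (hg : ∀ k, X ^ (k + 1) ∣ g k - 1) {n M : ℕ} (h : n < M) :
    coeff n (iprod f * iprod g) = coeff n ((∏ k ∈ range M, f k) * ∏ k ∈ range M, g k) := by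
  refine coeff_eq_of_X_pow_dvd_sub ?_ h
  rw [show iprod f * iprod g - (∏ k ∈ range M, f k) * ∏ k ∈ range M, g k =
      iprod f * (iprod g - ∏ k ∈ range M, g k) +
        (iprod f - ∏ k ∈ range M, f k) * ∏ k ∈ range M, g k by ring]
  exact dvd_add (dvd_mul_of_dvd_right (X_pow_dvd_iprod_sub_prod hg M) _)
    (dvd_mul_of_dvd_left (X_pow_dvd_iprod_sub_prod hf M) _)

lemma exists_two_mul_eq_mul_succ_iff (n : ℕ) :
    (∃ m : ℕ, 2 * n = m * (m + 1)) ↔ ∃ j : ℤ, (n : ℤ) = j * (2 * j - 1) := by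
  constructor
  · rintro ⟨m, hm⟩
    zify at hm
    obtain ⟨a, rfl | rfl⟩ := Nat.even_or_odd' m
    · exact ⟨-a, by push_cast at hm; linarith⟩
    · exact ⟨a + 1, by push_cast at hm; linarith⟩
  · rintro ⟨j, hj⟩
    rcases le_or_gt j 0 with hj0 | hj0
    · refine ⟨(-2 * j).toNat, ?_⟩
      zify
      rw [Int.toNat_of_nonneg (by omega)]
      linear_combination 2 * hj
    · refine ⟨(2 * j - 1).toNat, ?_⟩
      zify
      rw [Int.toNat_of_nonneg (by omega)]
      linear_combination 2 * hj

lemma mul_two_mul_sub_one_injective : Function.Injective fun j : ℤ => j * (2 * j - 1) := by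
  intro j k h
  have : (j - k) * (2 * (j + k) - 1) = 0 := by linear_combination h
  rcases mul_eq_zero.1 this with h | h <;> omega

lemma add_four_mul_shiftedChooseTwo_eq_iff (n N i : ℕ) :
    i + 4 * shiftedChooseTwo N i = n + N ↔ (n : ℤ) = (i - N) * (2 * (i - N) - 1) := by
  have h := two_mul_shiftedChooseTwo N i
  rw [← Nat.cast_inj (R := ℤ)]
  push_cast
  constructor <;> intro <;> linarith

lemma sum_range_ite_add_four_mul_shiftedChooseTwo_eq {n N : ℕ} (hn : n < N) :
    ∑ i ∈ range (2 * N + 1),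
        (if i + 4 * shiftedChooseTwo N i = n + N then (-1 : ℤ) ^ i else 0) =
      (-1) ^ N * if ∃ m : ℕ, 2 * n = m * (m + 1) then (-1) ^ n else 0 := by
  rw [mul_ite, mul_zero, ← pow_add]
  split_ifs with htri
  · obtain ⟨j, hj⟩ := (exists_two_mul_eq_mul_succ_iff n).1 htri
    have hjn : -n ≤ j ∧ j ≤ n := by constructor <;> nlinarith
    obtain ⟨i₀, hi₀⟩ : ∃ i₀ : ℕ, (i₀ : ℤ) = N + j :=
      ⟨(N + j).toNat, Int.toNat_of_nonneg (by omega)⟩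
    have hi₀_eq : i₀ + 4 * shiftedChooseTwo N i₀ = n + N :=
      (add_four_mul_shiftedChooseTwo_eq_iff n N i₀).2 (by rw [hi₀, hj]; ring)
    rw [sum_eq_single_of_mem i₀ (mem_range.2 (by omega)) fun i _ hne => if_neg fun h => hne ?_,
      if_pos hi₀_eq]
    · have : (i₀ : ℤ) + (N + n) = 2 * (N + j * j) := by rw [hi₀, hj]; ring
      rw [neg_one_pow_eq_pow_mod_two, show i₀ % 2 = (N + n) % 2 by omega,
        ← neg_one_pow_eq_pow_mod_two]
    · have := mul_two_mul_sub_one_injective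
        (((add_four_mul_shiftedChooseTwo_eq_iff n N i).1 h).symm.trans hj)
      omega
  · refine sum_eq_zero fun i _ => if_neg fun h => htri ?_
    exact (exists_two_mul_eq_mul_succ_iff n).2 ⟨_, (add_four_mul_shiftedChooseTwo_eq_iff n N i).1 h⟩

section Specialization

variable {R : Type*} [CommRing R]

lemma neg_X_pow_mul_prod_eq_sum (N : ℕ) :
    (-X : R⟦X⟧) ^ N * ∏ k ∈ range N, ((1 - X ^ (4 * k + 1)) * (1 - X ^ (4 * k + 3))) =
      ∑ i ∈ range (2 * N + 1),
        (-1) ^ i * X ^ (i + 4 * shiftedChooseTwo N i) * qBinom (X ^ 4 : R⟦X⟧) (2 * N) i := by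
  have h := prod_add_pow_mul_prod_one_add_pow_mul (X ^ 4 : R⟦X⟧) (-X) N N
  rw [← two_mul] at h
  convert h using 1
  · have h₁ (k : ℕ) : -X + (X ^ 4 : R⟦X⟧) ^ (k + 1) = -X * (1 - X ^ (4 * k + 3)) := by ring
    have h₂ (k : ℕ) : 1 + (X ^ 4 : R⟦X⟧) ^ k * -X = 1 - X ^ (4 * k + 1) := by ring
    simp only [h₁, h₂, prod_mul_distrib, prod_const, card_range]
    ring
  · refine sum_congr rfl fun i _ => ?_
    rw [neg_pow]
    ring

lemma coeff_X_pow_mul_qBinom_mul_prod {N i d : ℕ} (hi : i ≤ 2 * N) (hd : d < 2 * N) :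
    coeff d (X ^ (i + 4 * shiftedChooseTwo N i) * (qBinom (X ^ 4 : R⟦X⟧) (2 * N) i *
      ∏ j ∈ range (2 * N), (1 - (X ^ 4) ^ (j + 1)))) =
      if d = i + 4 * shiftedChooseTwo N i then 1 else 0 := by
  have h := pow_dvd_qBinom_mul_prod_sub_one (X ^ 4 : R⟦X⟧) hi
  rw [← pow_mul] at h
  have := sub_le_shiftedChooseTwo N i
  exact coeff_X_pow_mul_of_X_pow_dvd_sub_one h (by omega)

lemma prod_one_add_X_pow_mul_prod_one_sub_X_pow (N : ℕ) :
    (∏ k ∈ range (2 * N), (1 + (X : R⟦X⟧) ^ (2 * (k + 1))) * (1 - X ^ (2 * (k + 1) - 1))) *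
        ∏ k ∈ range (2 * N), (1 - (X : R⟦X⟧) ^ (2 * (k + 1))) =
      (∏ k ∈ range N, ((1 - X ^ (4 * k + 1)) * (1 - X ^ (4 * k + 3)))) *
        ∏ j ∈ range (2 * N), (1 - (X ^ 4) ^ (j + 1)) := by
  have h (k : ℕ) : (1 + (X : R⟦X⟧) ^ (2 * (k + 1))) * (1 - X ^ (2 * (k + 1) - 1)) *
      (1 - X ^ (2 * (k + 1))) = (1 - X ^ (2 * k + 1)) * (1 - (X ^ 4) ^ (k + 1)) := by
    rw [show 2 * (k + 1) - 1 = 2 * k + 1 by omega]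
    ring
  rw [← prod_mul_distrib, prod_congr rfl fun k _ => h k, prod_mul_distrib, prod_range_two_mul]
  congr 1
  exact prod_congr rfl fun k _ => by ring

end Specialization

lemma coeff_prod_one_sub_X_pow_mul_prod_one_sub_X_four_pow {n N : ℕ} (hn : n < N) :
    coeff n ((∏ k ∈ range N, ((1 - X ^ (4 * k + 1)) * (1 - X ^ (4 * k + 3)))) *
        ∏ j ∈ range (2 * N), (1 - ((X : ℤ⟦X⟧) ^ 4) ^ (j + 1))) =
      if ∃ m : ℕ, 2 * n = m * (m + 1) then (-1) ^ n else 0 := by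
  refine mul_left_cancel₀ (pow_ne_zero N (by norm_num : (-1 : ℤ) ≠ 0)) ?_
  have h := congrArg (fun f => coeff (n + N) (f * ∏ j ∈ range (2 * N), (1 - (X ^ 4) ^ (j + 1))))
    (neg_X_pow_mul_prod_eq_sum (R := ℤ) N)
  rw [neg_pow, mul_assoc, mul_assoc, show (-1 : ℤ⟦X⟧) ^ N = C ((-1) ^ N) by simp, coeff_C_mul,
    coeff_X_pow_mul, sum_mul, map_sum] at h
  rw [h, ← sum_range_ite_add_four_mul_shiftedChooseTwo_eq hn]
  refine sum_congr rfl fun i hi => ?_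
  rw [mul_assoc, mul_assoc, show (-1 : ℤ⟦X⟧) ^ i = C ((-1) ^ i) by simp, coeff_C_mul,
    coeff_X_pow_mul_qBinom_mul_prod (by have := mem_range.1 hi; omega) (by omega)]
  simp [eq_comm]

/-- As formal power series over `ℤ`,
`∏_{k ≥ 1} (1 + X^{2k})(1 - X^{2k-1}) · ∏_{k ≥ 1} (1 - X^{2k})
  = ∑_{n ≥ 0} (-1)^{n(n+1)/2} X^{n(n+1)/2} = ψ(-X)`;
the right-hand side has coefficient `(-1)^m` at `X^m` exactly when `m` is a triangular
number `n(n+1)/2`, and `0` otherwise. -/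
theorem stmt14 :
    iprod (fun k => (1 + (X : PowerSeries ℤ) ^ (2 * (k + 1))) *
        (1 - (X : PowerSeries ℤ) ^ (2 * (k + 1) - 1))) *
      iprod (fun k => 1 - (X : PowerSeries ℤ) ^ (2 * (k + 1))) =
    PowerSeries.mk (fun m => if ∃ n : ℕ, 2 * m = n * (n + 1) then (-1 : ℤ) ^ m else 0) := by
  ext n
  have hF (k : ℕ) :
      X ^ (k + 1) ∣ (1 + (X : ℤ⟦X⟧) ^ (2 * (k + 1))) * (1 - X ^ (2 * (k + 1) - 1)) - 1 := by
    refine dvd_mul_sub_one ?_ (pow_dvd_one_sub_pow_sub_one X (by omega))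
    rw [add_sub_cancel_left]
    exact pow_dvd_pow X (by omega)
  have hG (k : ℕ) : X ^ (k + 1) ∣ (1 - (X : ℤ⟦X⟧) ^ (2 * (k + 1))) - 1 :=
    pow_dvd_one_sub_pow_sub_one X (by omega)
  rw [coeff_mk, coeff_iprod_mul_iprod hF hG (M := 2 * (n + 1)) (by omega),
    prod_one_add_X_pow_mul_prod_one_sub_X_pow,
    coeff_prod_one_sub_X_pow_mul_prod_one_sub_X_four_pow (Nat.lt_succ_self n)]
end

section
/- As formal power series over ℤ, ∏_{k≥1} (1 − X^k) = ( ∑_{j∈ℤ} (−1)^j X^{j²} ) · ∏_{k≥1} (1 + X^k); that is, (X;X)_∞ = φ(−X) · (−X;X)_∞, where φ(−X) = 1 + 2∑_{j≥1} (−1)^j X^{j²}. -/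
/-!
Write `P_M = (X²; X²)_M` and `O_M = (X; X²)_M`. Gauss's finite identity
`∑_{|k| ≤ M} (-1)^k [2M, M+k]_{X²} X^{k²} = O_M²` follows from a three-term recursion for the
Gaussian binomials. Multiply it by `P_M`: since `[2M, M+k]_{X²} P_{M+k} P_{M-k} = P_{2M}` and all
`P_m` with `m ≥ n` agree modulo `X^n`, for `M ≥ 2n` each term with `k² < n` becomes
`(-1)^k X^{k²}` modulo `X^n`, so `P_M O_M² ≡ φ(-X)`. On the other side `(X; X)_{2M} = P_M O_M`
and `(X; X)_{2M} (-X; X)_{2M} = P_{2M} ≡ P_M`, so `O_M (-X; X)_{2M} ≡ 1` and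
`(X; X)_{2M} ≡ P_M O_M² (-X; X)_{2M} ≡ φ(-X) (-X; X)_{2M}`.
-/

open PowerSeries

open Finset

variable {R : Type*} [CommRing R]

/-- `(q; q)_n`. -/
def qPochhammer (q : R) (n : ℕ) : R := ∏ i ∈ range n, (1 - q ^ (i + 1))

theorem qPochhammer_succ (q : R) (n : ℕ) :
    qPochhammer q (n + 1) = qPochhammer q n * (1 - q ^ (n + 1)) :=
  prod_range_succ _ n

/-- The Gaussian binomial coefficient `[m, k]_q`, extended by zero to all `k : ℤ` so that index
shifts need no case split (the truncation in `k.toNat` only acts where the coefficient is zero). -/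
def gaussBinom (q : R) : ℕ → ℤ → R
  | 0, k => if k = 0 then 1 else 0
  | m + 1, k => gaussBinom q m (k - 1) + q ^ k.toNat * gaussBinom q m k

section gaussBinom

variable (q : R)

theorem gaussBinom_succ (m : ℕ) (k : ℤ) :
    gaussBinom q (m + 1) k = gaussBinom q m (k - 1) + q ^ k.toNat * gaussBinom q m k :=
  rfl

theorem gaussBinom_eq_zero {m : ℕ} {k : ℤ} (hk : k < 0 ∨ m < k) : gaussBinom q m k = 0 := by
  induction m generalizing k with
  | zero => simp only [gaussBinom]; rw [if_neg (by omega)]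
  | succ m ih => rw [gaussBinom_succ, ih (by omega), ih (by omega), mul_zero, add_zero]

theorem pow_mul_gaussBinom_congr (x : R) {m : ℕ} {k : ℤ} {e₁ e₂ : ℕ}
    (h : 0 ≤ k → k ≤ m → e₁ = e₂) : x ^ e₁ * gaussBinom q m k = x ^ e₂ * gaussBinom q m k := by
  by_cases hk : 0 ≤ k ∧ k ≤ m
  · rw [h hk.1 hk.2]
  · rw [gaussBinom_eq_zero q (by omega), mul_zero, mul_zero]

@[simp] theorem gaussBinom_zero_right (m : ℕ) : gaussBinom q m 0 = 1 := by
  induction m with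
  | zero => rfl
  | succ m ih => rw [gaussBinom_succ, gaussBinom_eq_zero q (by omega), ih]; simp

@[simp] theorem gaussBinom_self (m : ℕ) : gaussBinom q m m = 1 := by
  induction m with
  | zero => rfl
  | succ m ih =>
    rw [gaussBinom_succ, gaussBinom_eq_zero q (k := (m + 1 : ℕ)) (by omega)]
    simpa using ih

theorem gaussBinom_succ' (m : ℕ) (k : ℤ) :
    gaussBinom q (m + 1) k = q ^ ((m : ℤ) + 1 - k).toNat * gaussBinom q m (k - 1) +
      gaussBinom q m k := by
  induction m generalizing k with
  | zero =>
    simp only [gaussBinom]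
    by_cases h0 : k = 0
    · subst h0; simp
    by_cases h1 : k = 1
    · subst h1; simp
    · simp [h0, h1, sub_eq_zero]
  | succ m ih =>
    have hk : q ^ k.toNat * q ^ ((m : ℤ) + 1 - k).toNat * gaussBinom q m (k - 1) =
        q ^ ((m : ℤ) + 1 - (k - 1)).toNat * q ^ (k - 1).toNat * gaussBinom q m (k - 1) := by
      rw [← pow_add, ← pow_add]
      exact pow_mul_gaussBinom_congr q q (by omega)
    rw [gaussBinom_succ q (m + 1), show ((m + 1 : ℕ) : ℤ) + 1 - k = (m : ℤ) + 1 - (k - 1) by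
      push_cast; ring]
    linear_combination ih (k - 1) + q ^ k.toNat * ih k + hk - gaussBinom_succ q m k -
      q ^ ((m : ℤ) + 1 - (k - 1)).toNat * gaussBinom_succ q m (k - 1)

theorem gaussBinom_add_two (m : ℕ) (k : ℤ) :
    gaussBinom q (m + 2) k = q ^ ((m : ℤ) + 2 - k).toNat * gaussBinom q m (k - 2) +
      (1 + q ^ (m + 1)) * gaussBinom q m (k - 1) + q ^ k.toNat * gaussBinom q m k := by
  have hk : q ^ k.toNat * q ^ ((m : ℤ) + 1 - k).toNat * gaussBinom q m (k - 1) =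
      q ^ (m + 1) * gaussBinom q m (k - 1) := by
    rw [← pow_add]
    exact pow_mul_gaussBinom_congr q q (by omega)
  rw [gaussBinom_succ, gaussBinom_succ', gaussBinom_succ', show k - 1 - 1 = k - 2 by ring,
    show (m : ℤ) + 1 - (k - 1) = m + 2 - k by ring]
  linear_combination hk

theorem gaussBinom_mul_qPochhammer_mul_qPochhammer :
    ∀ a b : ℕ, gaussBinom q (a + b) a * (qPochhammer q a * qPochhammer q b) = qPochhammer q (a + b)
  | 0, b => by simp [qPochhammer]
  | a + 1, 0 => by rw [Nat.add_zero, gaussBinom_self]; simp [qPochhammer]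
  | a + 1, b + 1 => by
    have h₁ := gaussBinom_mul_qPochhammer_mul_qPochhammer a (b + 1)
    have h₂ := gaussBinom_mul_qPochhammer_mul_qPochhammer (a + 1) b
    rw [show a + (b + 1) = a + b + 1 by ring, qPochhammer_succ] at h₁
    rw [show a + 1 + b = a + b + 1 by ring, qPochhammer_succ, Nat.cast_succ] at h₂
    rw [show a + 1 + (b + 1) = a + b + 1 + 1 by ring, gaussBinom_succ, qPochhammer_succ,
      qPochhammer_succ, qPochhammer_succ, Nat.cast_succ, add_sub_cancel_right,
      Int.toNat_natCast_add_one]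
    linear_combination (1 - q ^ (a + 1)) * h₁ + q ^ (a + 1) * (1 - q ^ (b + 1)) * h₂

end gaussBinom

def gaussSummand (x : R) (n : ℕ) (k : ℤ) : R :=
  (k.negOnePow : R) * gaussBinom (x ^ 2) (2 * n) (n + k) * x ^ (k.natAbs ^ 2)

section gaussSummand

variable (x : R)

theorem support_gaussSummand_subset (n : ℕ) :
    Function.support (gaussSummand x n) ⊆ Set.Icc (-(n : ℤ)) n := by
  intro k hk
  by_contra h
  rw [Set.mem_Icc, not_and_or, not_le, not_le] at h
  exact hk (by rw [gaussSummand, gaussBinom_eq_zero _ (by omega), mul_zero, zero_mul])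

theorem gaussSummand_zero (k : ℤ) : gaussSummand x 0 k = if k = 0 then 1 else 0 := by
  by_cases hk : k = 0
  · simp [gaussSummand, hk]
  · rw [gaussSummand, gaussBinom_eq_zero _ (by omega), if_neg hk, mul_zero, zero_mul]

theorem gaussSummand_succ (n : ℕ) (k : ℤ) :
    gaussSummand x (n + 1) k = (1 + x ^ (2 * (2 * n + 1))) * gaussSummand x n k -
      x ^ (2 * n + 1) * (gaussSummand x n (k - 1) + gaussSummand x n (k + 1)) := by
  have shift (j t l : ℤ)
      (h : 0 ≤ n + j → n + j ≤ 2 * n → 0 ≤ t ∧ 2 * t + l ^ 2 = 2 * n + 1 + j ^ 2) :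
      x ^ (2 * t.toNat) * gaussBinom (x ^ 2) (2 * n) (n + j) * x ^ (l.natAbs ^ 2) =
        x ^ (2 * n + 1) * gaussBinom (x ^ 2) (2 * n) (n + j) * x ^ (j.natAbs ^ 2) := by
    rw [mul_right_comm, ← pow_add, mul_right_comm _ _ (x ^ _), ← pow_add]
    refine pow_mul_gaussBinom_congr _ x fun h₁ h₂ => ?_
    obtain ⟨ht, he⟩ := h h₁ (by exact_mod_cast h₂)
    zify
    rw [Int.toNat_of_nonneg ht]
    push_cast [Int.natCast_natAbs, sq_abs]
    exact he
  simp only [gaussSummand]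
  rw [show 2 * (n + 1) = 2 * n + 2 by ring, gaussBinom_add_two, ← pow_mul, ← pow_mul, ← pow_mul,
    show ((2 * n : ℕ) : ℤ) + 2 - ((n + 1 : ℕ) + k) = n - (k - 1) by push_cast; ring,
    show ((n + 1 : ℕ) : ℤ) + k - 2 = n + (k - 1) by push_cast; ring,
    show ((n + 1 : ℕ) : ℤ) + k - 1 = n + k by push_cast; ring,
    show ((n + 1 : ℕ) : ℤ) + k = n + (k + 1) by push_cast; ring,
    Int.negOnePow_sub, Int.negOnePow_succ, Int.negOnePow_one]
  push_cast
  linear_combination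
    (k.negOnePow : R) * shift (k - 1) (n - (k - 1)) k (fun _ _ => ⟨by omega, by ring⟩) +
    (k.negOnePow : R) * shift (k + 1) (n + (k + 1)) k (fun _ _ => ⟨by omega, by ring⟩)

theorem finsum_gaussSummand (n : ℕ) :
    ∑ᶠ k, gaussSummand x n k = (∏ i ∈ range n, (1 - x ^ (2 * i + 1))) ^ 2 := by
  induction n with
  | zero =>
    rw [finsum_eq_single _ 0 fun k hk => by rw [gaussSummand_zero, if_neg hk]]
    simp [gaussSummand_zero]
  | succ n ih =>
    have hfin : Function.HasFiniteSupport (gaussSummand x n) :=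
      (Set.finite_Icc _ _).subset (support_gaussSummand_subset x n)
    have hfin_sub : Function.HasFiniteSupport fun k => gaussSummand x n (k - 1) :=
      hfin.preimage (sub_left_injective (b := 1)).injOn
    have hfin_add : Function.HasFiniteSupport fun k => gaussSummand x n (k + 1) :=
      hfin.preimage (add_left_injective 1).injOn
    have hsub : ∑ᶠ k, gaussSummand x n (k - 1) = ∑ᶠ k, gaussSummand x n k :=
      finsum_comp_equiv (Equiv.subRight 1)
    have hadd : ∑ᶠ k, gaussSummand x n (k + 1) = ∑ᶠ k, gaussSummand x n k :=
      finsum_comp_equiv (Equiv.addRight 1)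
    simp only [gaussSummand_succ]
    rw [finsum_sub_distrib, ← mul_finsum' _ _ hfin, ← mul_finsum',
      finsum_add_distrib hfin_sub hfin_add, hsub, hadd, ih, prod_range_succ]
    · ring
    · exact hfin_sub.add hfin_add
    · exact .mul_right _ hfin
    · exact .mul_right _ (hfin_sub.add hfin_add)

theorem sum_Icc_gaussSummand (n : ℕ) :
    ∑ k ∈ Icc (-(n : ℤ)) n, gaussSummand x n k = (∏ i ∈ range n, (1 - x ^ (2 * i + 1))) ^ 2 := by
  rw [← finsum_gaussSummand, finsum_eq_sum_of_support_subset]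
  simpa using support_gaussSummand_subset x n

end gaussSummand

theorem prod_range_two_mul_one_sub_pow (x : R) (M : ℕ) :
    ∏ k ∈ range (2 * M), (1 - x ^ (k + 1)) =
      qPochhammer (x ^ 2) M * ∏ i ∈ range M, (1 - x ^ (2 * i + 1)) := by
  induction M with
  | zero => simp [qPochhammer]
  | succ M ih =>
    rw [show 2 * (M + 1) = 2 * M + 1 + 1 by ring, prod_range_succ, prod_range_succ, ih,
      qPochhammer_succ, prod_range_succ]
    ring

theorem prod_one_sub_pow_mul_prod_one_add_pow (x : R) (L : ℕ) :
    (∏ k ∈ range L, (1 - x ^ (k + 1))) * ∏ k ∈ range L, (1 + x ^ (k + 1)) =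
      qPochhammer (x ^ 2) L := by
  rw [← prod_mul_distrib, qPochhammer]
  exact prod_congr rfl fun k _ => by ring

theorem mul_smodEq_mul_of_mem {I : Ideal R} {a b z : R} (hz : z ∈ I) :
    a * z ≡ b * z [SMOD I] := by
  rw [SModEq.sub_mem, ← sub_mul]
  exact I.mul_mem_left _ hz

section PowerSeries

theorem smodEq_X_pow_iff {n : ℕ} {f g : R⟦X⟧} :
    f ≡ g [SMOD Ideal.span {X ^ n}] ↔ ∀ i < n, coeff i f = coeff i g := by
  simp only [SModEq.sub_mem, Ideal.mem_span_singleton, X_pow_dvd_iff, map_sub, sub_eq_zero]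

theorem eq_of_forall_smodEq_X_pow {f g : R⟦X⟧} (h : ∀ n, f ≡ g [SMOD Ideal.span {X ^ n}]) :
    f = g :=
  ext fun i => smodEq_X_pow_iff.1 (h (i + 1)) i (lt_add_one i)

theorem prod_range_smodEq_prod_range {f : ℕ → R⟦X⟧} (hf : ∀ k, X ^ (k + 1) ∣ f k - 1)
    {n a b : ℕ} (hna : n ≤ a) (hab : a ≤ b) :
    ∏ k ∈ range b, f k ≡ ∏ k ∈ range a, f k [SMOD Ideal.span {X ^ n}] := by
  rw [← prod_range_mul_prod_Ico f hab]
  conv_rhs => rw [← mul_one (∏ k ∈ range a, f k), ← prod_const_one (s := Ico a b)]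
  refine SModEq.rfl.mul (SModEq.prod fun k hk => ?_)
  rw [SModEq.sub_mem, Ideal.mem_span_singleton]
  exact (pow_dvd_pow X (by rw [mem_Ico] at hk; omega)).trans (hf k)

theorem iprod_smodEq_prod_range {f : ℕ → ℤ⟦X⟧} (hf : ∀ k, X ^ (k + 1) ∣ f k - 1) {n M : ℕ}
    (h : n ≤ M) : iprod f ≡ ∏ k ∈ range M, f k [SMOD Ideal.span {X ^ n}] := by
  refine smodEq_X_pow_iff.2 fun i hi => ?_
  rw [iprod, coeff_mk]
  exact (smodEq_X_pow_iff.1 (prod_range_smodEq_prod_range hf le_rfl (by omega : i + 1 ≤ M)) i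
    (lt_add_one i)).symm

variable {q : R⟦X⟧}

theorem qPochhammer_smodEq (hq : X ∣ q) {n a b : ℕ} (hna : n ≤ a) (hab : a ≤ b) :
    qPochhammer q b ≡ qPochhammer q a [SMOD Ideal.span {X ^ n}] := by
  obtain ⟨r, rfl⟩ := hq
  exact prod_range_smodEq_prod_range (fun k => ⟨-r ^ (k + 1), by ring⟩) hna hab

theorem isUnit_qPochhammer (hq : X ∣ q) (n : ℕ) : IsUnit (qPochhammer q n) := by
  simp [isUnit_iff_constantCoeff, qPochhammer, X_dvd_iff.1 hq]

theorem gaussBinom_mul_qPochhammer_smodEq_one (hq : X ∣ q) {n a b c : ℕ} (ha : n ≤ a)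
    (hb : n ≤ b) (hc : n ≤ c) :
    gaussBinom q (a + b) a * qPochhammer q c ≡ 1 [SMOD Ideal.span {X ^ n}] := by
  have hP {m : ℕ} (hm : n ≤ m) := SModEq.idealQuotientMk.1 (qPochhammer_smodEq hq le_rfl hm)
  have hu := (isUnit_qPochhammer hq n).map (Ideal.Quotient.mk (Ideal.span {X ^ n}))
  have key := congrArg (Ideal.Quotient.mk (Ideal.span {X ^ n}))
    (gaussBinom_mul_qPochhammer_mul_qPochhammer q a b)
  rw [map_mul, map_mul, hP ha, hP hb, hP (m := a + b) (by omega)] at key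
  rw [SModEq.idealQuotientMk, map_mul, map_one, hP hc]
  exact hu.mul_right_cancel (by linear_combination key)

end PowerSeries

theorem qPochhammer_mul_sq_smodEq_sum_Icc {n M : ℕ} (h : 2 * n ≤ M) :
    qPochhammer (X ^ 2 : R⟦X⟧) M * (∏ i ∈ range M, (1 - X ^ (2 * i + 1))) ^ 2 ≡
      ∑ k ∈ Icc (-(M : ℤ)) M, (k.negOnePow : R⟦X⟧) * X ^ (k.natAbs ^ 2)
        [SMOD Ideal.span {X ^ n}] := by
  rw [← sum_Icc_gaussSummand, mul_sum]
  refine SModEq.sum fun k hk => ?_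
  rw [mem_Icc] at hk
  by_cases hkn : k.natAbs ^ 2 < n
  · have : k.natAbs ≤ k.natAbs ^ 2 := Nat.le_self_pow two_ne_zero _
    obtain ⟨a, ha⟩ : ∃ a : ℕ, (a : ℤ) = M + k := ⟨(M + k).toNat, by omega⟩
    obtain ⟨b, hb⟩ : ∃ b : ℕ, (b : ℤ) = M - k := ⟨(M - k).toNat, by omega⟩
    have hG := gaussBinom_mul_qPochhammer_smodEq_one (dvd_pow_self (X : R⟦X⟧) two_ne_zero)
      (a := a) (b := b) (c := M) (n := n) (by omega) (by omega) (by omega)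
    rw [gaussSummand, show 2 * M = a + b by omega, ← ha]
    calc _ = (k.negOnePow : R⟦X⟧) * (gaussBinom (X ^ 2) (a + b) a * qPochhammer (X ^ 2) M) *
          X ^ (k.natAbs ^ 2) := by ring
      _ ≡ (k.negOnePow : R⟦X⟧) * 1 * X ^ (k.natAbs ^ 2) [SMOD Ideal.span {X ^ n}] := by
          gcongr <;> exact .rfl
      _ = _ := by rw [mul_one]
  · rw [gaussSummand, ← mul_assoc]
    exact mul_smodEq_mul_of_mem (Ideal.mem_span_singleton.2 (pow_dvd_pow X (by omega)))

/-- Ramanujan's `φ(-X) = ∑_{j ∈ ℤ} (-1)^j X^{j²}`, in the form used in the statement. -/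
noncomputable def phiNeg : ℤ⟦X⟧ :=
  mk fun n => ∑' j : ℤ, if j ^ 2 = (n : ℤ) then (if Even j then (1 : ℤ) else -1) else 0

theorem phiNeg_smodEq_sum_Icc {n M : ℕ} (h : n ≤ M + 1) :
    phiNeg ≡ ∑ k ∈ Icc (-(M : ℤ)) M, (k.negOnePow : ℤ⟦X⟧) * X ^ (k.natAbs ^ 2)
      [SMOD Ideal.span {X ^ n}] := by
  refine smodEq_X_pow_iff.2 fun i hi => ?_
  rw [phiNeg, coeff_mk, map_sum]
  rw [tsum_eq_sum (s := Icc (-(M : ℤ)) M) fun j hj => if_neg ?_]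
  · refine sum_congr rfl fun k _ => ?_
    have hsq : ((k.natAbs ^ 2 : ℕ) : ℤ) = k ^ 2 := by push_cast; exact sq_abs k
    rw [← map_intCast (C (R := ℤ)), coeff_C_mul_X_pow]
    simp only [← hsq, Nat.cast_inj, @eq_comm _ i]
    rcases Int.even_or_odd k with hk | hk
    · simp [hk, Int.negOnePow_even]
    · simp [Int.negOnePow_odd _ hk, Int.not_even_iff_odd.2 hk]
  · rw [mem_Icc, not_and_or, not_le, not_le] at hj
    intro hji
    rcases hj with hj | hj <;> nlinarith

/-- As formal power series over `ℤ`,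
`∏_{k ≥ 1} (1 - X^k) = (∑_{j ∈ ℤ} (-1)^j X^{j²}) · ∏_{k ≥ 1} (1 + X^k)`, i.e.
`(X;X)_∞ = φ(-X) · (-X;X)_∞`, where `φ(-X) = ∑_{j ∈ ℤ} (-1)^j X^{j²}` is the series whose
coefficient of `X^n` is the sum of `(-1)^j` over the (finitely many) `j ∈ ℤ` with `j² = n`. -/
theorem stmt17 :
    iprod (fun k => 1 - (X : PowerSeries ℤ) ^ (k + 1)) =
      (PowerSeries.mk fun n =>
          ∑' j : ℤ, if j ^ 2 = (n : ℤ) then (if Even j then (1 : ℤ) else -1) else 0) *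
        iprod (fun k => 1 + (X : PowerSeries ℤ) ^ (k + 1)) := by
  change iprod _ = phiNeg * iprod _
  refine eq_of_forall_smodEq_X_pow fun n => ?_
  have hsub := iprod_smodEq_prod_range (f := fun k => 1 - X ^ (k + 1)) (fun k => ⟨-1, by ring⟩)
    (by omega : n ≤ 2 * (2 * n))
  have hadd := iprod_smodEq_prod_range (f := fun k => 1 + X ^ (k + 1)) (fun k => ⟨1, by ring⟩)
    (by omega : n ≤ 2 * (2 * n))
  have hphi := (phiNeg_smodEq_sum_Icc (by omega : n ≤ 2 * n + 1)).trans
    (qPochhammer_mul_sq_smodEq_sum_Icc (R := ℤ) le_rfl).symm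
  have hpair := prod_one_sub_pow_mul_prod_one_add_pow (X : ℤ⟦X⟧) (2 * (2 * n)) ▸
    qPochhammer_smodEq (dvd_pow_self X two_ne_zero) (by omega : n ≤ 2 * n) (by omega)
  rw [prod_range_two_mul_one_sub_pow] at hsub hpair
  rw [SModEq.idealQuotientMk] at hsub hadd hphi hpair ⊢
  simp only [map_mul, map_pow] at hsub hpair hphi ⊢
  rw [hsub, hadd, hphi]
  set π := Ideal.Quotient.mk (Ideal.span {(X : ℤ⟦X⟧) ^ n})
  set p := π (qPochhammer (X ^ 2) (2 * n))
  set o := π (∏ i ∈ range (2 * n), (1 - X ^ (2 * i + 1)))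
  set b := π (∏ k ∈ range (2 * (2 * n)), (1 + X ^ (k + 1)))
  have hu : IsUnit p := (isUnit_qPochhammer (dvd_pow_self X two_ne_zero) _).map π
  -- Euler's identity `(X; X²)_∞ (-X; X)_∞ = 1`, modulo `X^n`
  have hob : o * b = 1 := hu.mul_left_cancel (by linear_combination hpair)
  linear_combination (-(p * o)) * hob
end
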